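/- If {g_n} is a normalized tight frame obtained from unit vectors {e_n} via the Kaczmarz algorithm, then dim H = ∑_{n=0}^∞ ‖g_n‖² = Tr(I - UU*), where U is the strictly lower triangular matrix with (I+U)(I+M) = I and M the strictly lower triangular part of the Gram matrix of {e_n}. -/

import Mathlib

open scoped ComplexInnerProductSpace ENNReal

/-- The Kaczmarz algorithm iterates. -/
noncomputable def kacz {H : Type*} [NormedAddCommGroup H] [InnerProductSpace ℂ H]
    (e : ℕ → H) (x : H) : ℕ → H
  | 0 => ⟪e 0, x⟫ • e 0
  | (n+1) => kacz e x n + ⟪e (n+1), x - kacz e x n⟫ • e (n+1)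

/-!
Each Kaczmarz step is the orthogonal projection of the residual `x - kacz e x n` onto the
complement of `e (n+1)`, and its coefficient is `⟪g (n+1), x⟫`; hence
`‖x - kacz e x n‖² = ‖x‖² - ∑_{i ≤ n} |⟪g i, x⟫|²`, and effectivity says that `g` is a Parseval
frame. For a Parseval frame, expanding each `‖g n‖²` in a Hilbert basis `b` and exchanging the
two sums gives `∑ ‖g n‖² = ∑_b ‖b‖² = dim H`.

For the trace: `e = (I + M) g` is the Kaczmarz recursion, so `g = (I + U) e`, and for unit
vectors the Gram matrix of `e` is `(I + M) + (I + M)* - I`. Writing `a` for row `n` of `I + U`,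
`‖g n‖² = 2 Re ⟨a, a (I + M)⟩ - ‖a‖² = 2 - (1 + ∑_{k<n} |U n k|²)`.
-/

open scoped InnerProductSpace ComplexConjugate
open Finset RCLike Filter Topology

theorem HasSum.tsum_ofReal_eq {α : Type*} {u : α → ℝ} {a : ℝ} (h : HasSum u a)
    (hu : ∀ i, 0 ≤ u i) : ∑' i, ENNReal.ofReal (u i) = ENNReal.ofReal a := by
  rw [← ENNReal.ofReal_tsum_of_nonneg hu h.summable, h.tsum_eq]

section InnerProductSpace

variable {𝕜 E : Type*} [RCLike 𝕜] [NormedAddCommGroup E] [InnerProductSpace 𝕜 E]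

theorem HilbertBasis.hasSum_norm_inner_sq {ι : Type*} (b : HilbertBasis ι 𝕜 E) (x : E) :
    HasSum (fun i => ‖⟪b i, x⟫_𝕜‖ ^ 2) (‖x‖ ^ 2) := by
  simpa [← b.repr_apply_apply] using lp.hasSum_norm (p := 2) (by norm_num) (b.repr x)

theorem HilbertBasis.card_eq_toENat_rank {ι : Type*} (b : HilbertBasis ι 𝕜 E) :
    ENat.card ι = (Module.rank 𝕜 E).toENat := by
  cases finite_or_infinite ι with
  | inl hfin =>
    have := Fintype.ofFinite ι
    let c := b.toOrthonormalBasis.toBasis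
    have := Module.Finite.of_basis c
    rw [ENat.card_eq_coe_fintype_card, ← Module.finrank_eq_card_basis c, ← Module.finrank_eq_rank,
      Cardinal.toENat_nat]
  | inr hinf =>
    rw [ENat.card_eq_top_of_infinite, eq_comm, Cardinal.toENat_eq_top]
    exact b.orthonormal.linearIndependent.aleph0_le_rank

theorem tsum_ofReal_norm_sq_eq_toENat_rank [CompleteSpace E] {ι : Type*} (f : ι → E)
    (hf : ∀ x, HasSum (fun i => ‖⟪f i, x⟫_𝕜‖ ^ 2) (‖x‖ ^ 2)) :
    ∑' i, ENNReal.ofReal (‖f i‖ ^ 2) = (Module.rank 𝕜 E).toENat := by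
  obtain ⟨s, b, -⟩ := exists_hilbertBasis 𝕜 E
  calc ∑' i, ENNReal.ofReal (‖f i‖ ^ 2)
      = ∑' i, ∑' j, ENNReal.ofReal (‖⟪b j, f i⟫_𝕜‖ ^ 2) := by
        simp only [(b.hasSum_norm_inner_sq _).tsum_ofReal_eq fun _ => sq_nonneg _]
    _ = ∑' j, ∑' i, ENNReal.ofReal (‖⟪f i, b j⟫_𝕜‖ ^ 2) := by
        simp only [norm_inner_symm (b _)]
        exact ENNReal.tsum_comm
    _ = ∑' j, ENNReal.ofReal (‖b j‖ ^ 2) := by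
        simp only [(hf _).tsum_ofReal_eq fun _ => sq_nonneg _]
    _ = (Module.rank 𝕜 E).toENat := by
        simp [b.orthonormal.1, ENNReal.tsum_one, b.card_eq_toENat_rank]

theorem norm_sub_inner_smul_sq {u : E} (hu : ‖u‖ = 1) (y : E) :
    ‖y - ⟪u, y⟫_𝕜 • u‖ ^ 2 = ‖y‖ ^ 2 - ‖⟪u, y⟫_𝕜‖ ^ 2 := by
  have hproj : ⟪y, ⟪u, y⟫_𝕜 • u⟫_𝕜 = (‖⟪u, y⟫_𝕜‖ : 𝕜) ^ 2 := by
    rw [inner_smul_right, ← inner_conj_symm y u, RCLike.mul_conj]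
  rw [norm_sub_sq (𝕜 := 𝕜), hproj, norm_smul, hu, mul_one, ← RCLike.ofReal_pow,
    RCLike.ofReal_re]
  ring

theorem norm_sum_smul_sq_of_gram {ι : Type*} [DecidableEq ι] (s : Finset ι) (v : ι → E)
    (a : ι → 𝕜) (B : ι → ι → 𝕜)
    (hgram : ∀ j k, ⟪v j, v k⟫_𝕜 = B k j + conj (B j k) - if j = k then 1 else 0) :
    ‖∑ k ∈ s, a k • v k‖ ^ 2
      = 2 * re (∑ j ∈ s, conj (a j) * ∑ k ∈ s, a k * B k j) - ∑ k ∈ s, ‖a k‖ ^ 2 := by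
  set S := ∑ j ∈ s, conj (a j) * ∑ k ∈ s, a k * B k j
  have hS : S = ∑ j ∈ s, ∑ k ∈ s, conj (a j) * a k * B k j := by
    simp only [S, mul_sum, mul_assoc]
  have hconj : conj S = ∑ j ∈ s, ∑ k ∈ s, conj (a j) * a k * conj (B j k) := by
    simp only [S, map_sum, map_mul, conj_conj, mul_sum]
    rw [sum_comm]
    exact sum_congr rfl fun _ _ => sum_congr rfl fun _ _ => by ring
  have hinner : ⟪∑ k ∈ s, a k • v k, ∑ k ∈ s, a k • v k⟫_𝕜
      = S + conj S - ∑ k ∈ s, (‖a k‖ : 𝕜) ^ 2 := by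
    calc _ = ∑ j ∈ s, ∑ k ∈ s, (conj (a j) * a k * B k j + conj (a j) * a k * conj (B j k)
            - if j = k then conj (a j) * a k else 0) := by
          rw [sum_inner]
          refine sum_congr rfl fun j _ => ?_
          rw [inner_smul_left, inner_sum, mul_sum]
          refine sum_congr rfl fun k _ => ?_
          rw [inner_smul_right, hgram]
          split_ifs <;> ring
      _ = S + conj S - ∑ k ∈ s, (‖a k‖ : 𝕜) ^ 2 := by
          simp only [sum_add_distrib, sum_sub_distrib, sum_ite_eq, sum_ite_mem, inter_self,
            RCLike.conj_mul, ← hS, ← hconj]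
  rw [@norm_sq_eq_re_inner 𝕜, hinner]
  simp [two_mul]

theorem inner_eq_add_conj_sub_of_norm_eq_one {ι : Type*} [LinearOrder ι] {v : ι → E}
    (hv : ∀ i, ‖v i‖ = 1) {M : ι → ι → 𝕜}
    (hM : ∀ i j, M i j = if j < i then ⟪v j, v i⟫_𝕜 else 0) (j k : ι) :
    ⟪v j, v k⟫_𝕜 = (if k = j then 1 else M k j) + conj (if j = k then 1 else M j k)
      - if j = k then 1 else 0 := by
  rcases lt_trichotomy j k with h | rfl | h
  · simp [hM, h, h.ne, h.ne', h.not_gt]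
  · simp [inner_self_eq_norm_sq_to_K, hv]
  · simp [hM, h, h.ne, h.ne', h.not_gt]

end InnerProductSpace

theorem eq_sum_smul_of_sum_mul_eq_ite {R V : Type*} [Semiring R] [AddCommMonoid V] [Module R V]
    {A B : ℕ → ℕ → R} {e g : ℕ → V} (hB : ∀ k i, k < i → B k i = 0)
    (he : ∀ k, e k = ∑ i ∈ range (k + 1), B k i • g i) {n : ℕ}
    (hAB : ∀ j, ∑ k ∈ range (n + 1), A n k * B k j = if n = j then 1 else 0) :
    g n = ∑ k ∈ range (n + 1), A n k • e k := by
  have he' : ∀ k ∈ range (n + 1), e k = ∑ i ∈ range (n + 1), B k i • g i := by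
    intro k hk
    rw [he k]
    refine sum_subset (range_subset_range.2 (mem_range.1 hk)) fun i _ hi => ?_
    rw [hB k i (by simpa using hi), zero_smul]
  calc g n = ∑ i ∈ range (n + 1), (if n = i then (1 : R) else 0) • g i := by simp
    _ = ∑ i ∈ range (n + 1), ∑ k ∈ range (n + 1), (A n k * B k i) • g i := by
        simp only [← hAB, sum_smul]
    _ = ∑ k ∈ range (n + 1), A n k • e k := by
        rw [sum_comm]
        refine sum_congr rfl fun k hk => ?_
        simp only [he' k hk, smul_sum, mul_smul]

section Kaczmarz

variable {H : Type*} [NormedAddCommGroup H] [InnerProductSpace ℂ H] {e g : ℕ → H}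

theorem inner_sub_sum_kaczmarz (hg : ∀ n, g n = e n - ∑ i ∈ range n, ⟪e i, e n⟫ • g i)
    (x : H) (n : ℕ) :
    ⟪e n, x - ∑ i ∈ range n, ⟪g i, x⟫ • e i⟫ = ⟪g n, x⟫ := by
  rw [hg n, inner_sub_right, inner_sum, inner_sub_left, sum_inner]
  congr 1
  refine sum_congr rfl fun i _ => ?_
  rw [inner_smul_right, inner_smul_left, inner_conj_symm, mul_comm]

theorem kacz_eq_sum (hg : ∀ n, g n = e n - ∑ i ∈ range n, ⟪e i, e n⟫ • g i) (x : H) (n : ℕ) :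
    kacz e x n = ∑ i ∈ range (n + 1), ⟪g i, x⟫ • e i := by
  induction n with
  | zero => simpa [kacz] using congrArg (⟪·, x⟫ • e 0) (hg 0).symm
  | succ n ih => rw [kacz, ih, inner_sub_sum_kaczmarz hg, sum_range_succ _ (n + 1)]

theorem norm_sub_kacz_sq (he : ∀ n, ‖e n‖ = 1)
    (hg : ∀ n, g n = e n - ∑ i ∈ range n, ⟪e i, e n⟫ • g i) (x : H) (n : ℕ) :
    ‖x - kacz e x n‖ ^ 2 = ‖x‖ ^ 2 - ∑ i ∈ range (n + 1), ‖⟪g i, x⟫‖ ^ 2 := by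
  induction n with
  | zero =>
    have h0 : ⟪e 0, x⟫ = ⟪g 0, x⟫ := by simpa using inner_sub_sum_kaczmarz hg x 0
    simpa [kacz, h0] using norm_sub_inner_smul_sq (𝕜 := ℂ) (he 0) x
  | succ n ih =>
    have hstep : x - kacz e x (n + 1)
        = (x - kacz e x n) - ⟪e (n + 1), x - kacz e x n⟫ • e (n + 1) := by
      rw [kacz, sub_sub]
    rw [hstep, norm_sub_inner_smul_sq (he _), ih, kacz_eq_sum hg, inner_sub_sum_kaczmarz hg,
      sum_range_succ _ (n + 1)]
    ring

theorem hasSum_norm_inner_sq_kaczmarz (he : ∀ n, ‖e n‖ = 1)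
    (heff : ∀ x : H, Tendsto (kacz e x) atTop (𝓝 x))
    (hg : ∀ n, g n = e n - ∑ i ∈ range n, ⟪e i, e n⟫ • g i) (x : H) :
    HasSum (fun n => ‖⟪g n, x⟫‖ ^ 2) (‖x‖ ^ 2) := by
  rw [hasSum_iff_tendsto_nat_of_nonneg (fun _ => sq_nonneg _), ← tendsto_add_atTop_iff_nat 1]
  have hres : Tendsto (fun n => ‖x - kacz e x n‖ ^ 2) atTop (𝓝 0) := by
    simpa using ((heff x).const_sub x).norm.pow 2
  have hpartial := hres.const_sub (‖x‖ ^ 2)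
  simp only [norm_sub_kacz_sq he hg, sub_sub_cancel, sub_zero] at hpartial
  exact hpartial

theorem norm_sq_kaczmarz (he : ∀ n, ‖e n‖ = 1)
    (hg : ∀ n, g n = e n - ∑ i ∈ range n, ⟪e i, e n⟫ • g i) {M U : ℕ → ℕ → ℂ}
    (hM : ∀ i j, M i j = if j < i then ⟪e j, e i⟫ else 0)
    (hUM : ∀ i j, (∑ k ∈ range (i + 1),
        (if i = k then 1 else U i k) * (if k = j then 1 else M k j)) =
      if i = j then 1 else 0) (n : ℕ) :
    ‖g n‖ ^ 2 = 1 - ∑ k ∈ range n, ‖U n k‖ ^ 2 := by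
  set B : ℕ → ℕ → ℂ := fun k j => if k = j then 1 else M k j
  have hB : ∀ k i, k < i → B k i = 0 := fun k i h => by simp [B, hM, h.ne, h.not_gt]
  have heB : ∀ k, e k = ∑ i ∈ range (k + 1), B k i • g i := by
    intro k
    have hBk : ∀ i ∈ range k, B k i • g i = ⟪e i, e k⟫ • g i := fun i hi => by
      simp [B, hM, mem_range.1 hi, (mem_range.1 hi).ne']
    rw [sum_range_succ, sum_congr rfl hBk, hg k]
    simp [B]
  have hgA := eq_sum_smul_of_sum_mul_eq_ite (A := fun i k => if i = k then 1 else U i k)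
    hB heB (hUM n)
  have hrow : ∑ j ∈ range (n + 1), conj (if n = j then 1 else U n j)
      * ∑ k ∈ range (n + 1), (if n = k then 1 else U n k) * B k j = 1 := by
    simp only [B, hUM n]
    simp
  rw [hgA, norm_sum_smul_sq_of_gram _ _ _ B (inner_eq_add_conj_sub_of_norm_eq_one he hM), hrow,
    sum_range_succ, sum_congr rfl fun k hk => by rw [if_neg (mem_range.1 hk).ne']]
  norm_num
  ring

end Kaczmarz

theorem dim_eq_sum_norm_sq_eq_trace_general
    {H : Type*} [NormedAddCommGroup H] [InnerProductSpace ℂ H] [CompleteSpace H]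
    (e g : ℕ → H) (he : ∀ n, ‖e n‖ = 1)
    -- `e` is effective, so `g` is a normalized tight frame:
    (heff : ∀ x : H, Filter.Tendsto (kacz e x) Filter.atTop (nhds x))
    (hg0 : g 0 = e 0)
    (hg : ∀ n, 0 < n → g n = e n - ∑ i ∈ Finset.range n, ⟪e i, e n⟫ • g i)
    (M U : ℕ → ℕ → ℂ)
    (hM : ∀ i j, M i j = if j < i then ⟪e j, e i⟫ else 0)
    (hUM : ∀ i j, (∑ k ∈ Finset.range (i + 1),
        (if i = k then 1 else U i k) * (if k = j then 1 else M k j)) =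
      if i = j then 1 else 0) :
    -- `dim H = ∑ ‖g_n‖² = Tr(I - UU*)` (as extended nonnegative reals).
    (∑' n : ℕ, ENNReal.ofReal (‖g n‖ ^ 2)) = ((Module.rank ℂ H).toENat : ℝ≥0∞) ∧
    (∑' n : ℕ, ENNReal.ofReal (1 - ∑ k ∈ Finset.range n, ‖U n k‖ ^ 2)) =
      ((Module.rank ℂ H).toENat : ℝ≥0∞) := by
  have hg' : ∀ n, g n = e n - ∑ i ∈ range n, ⟪e i, e n⟫ • g i := by
    rintro (_ | n)
    · simpa using hg0
    · exact hg _ n.succ_pos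
  have hdim := tsum_ofReal_norm_sq_eq_toENat_rank g (hasSum_norm_inner_sq_kaczmarz he heff hg')
  refine ⟨hdim, ?_⟩
  simpa only [norm_sq_kaczmarz he hg' hM hUM] using hdim

theorem dim_eq_sum_norm_sq_eq_trace
    {H : Type*} [NormedAddCommGroup H] [InnerProductSpace ℂ H] [CompleteSpace H]
    (e g : ℕ → H) (he : ∀ n, ‖e n‖ = 1)
    -- `e` is effective, so `g` is a normalized tight frame:
    (heff : ∀ x : H, Filter.Tendsto (kacz e x) Filter.atTop (nhds x))
    (hg0 : g 0 = e 0)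
    (hg : ∀ n, 0 < n → g n = e n - ∑ i ∈ Finset.range n, ⟪e i, e n⟫ • g i)
    (M U : ℕ → ℕ → ℂ)
    (hM : ∀ i j, M i j = if j < i then ⟪e j, e i⟫ else 0)
    (hUtri : ∀ i j, i ≤ j → U i j = 0)
    (hUM : ∀ i j, (∑ k ∈ Finset.range (i + 1),
        (if i = k then 1 else U i k) * (if k = j then 1 else M k j)) =
      if i = j then 1 else 0) :
    -- `dim H = ∑ ‖g_n‖² = Tr(I - UU*)` (as extended nonnegative reals).
    (∑' n : ℕ, ENNReal.ofReal (‖g n‖ ^ 2)) = ((Module.rank ℂ H).toENat : ℝ≥0∞) ∧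
    (∑' n : ℕ, ENNReal.ofReal (1 - ∑ k ∈ Finset.range n, ‖U n k‖ ^ 2)) =
      ((Module.rank ℂ H).toENat : ℝ≥0∞) :=
  dim_eq_sum_norm_sq_eq_trace_general e g he heff hg0 hg M U hM hUM
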